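/- arXiv:0905.0219 — 4 statements merged into one kernel-verified Lean document; each statement's English description precedes it below -/
import Mathlib

section
/- Let n ≥ 1 and let A be an n×n Perron–Frobenius matrix. Then 1 + (∑_{i,j} A_{ij}) − n ≤ λ(A)^n, where λ(A) is the spectral radius of A. (Equivalently, 1 + ∑_i (r_i − 1) ≤ λ(A)^n, where r_i = ∑_j A_{ij} is the i-th row sum, i.e., the out-degree of the i-th vertex of the adjacency graph of A.) -/
open scoped ENNReal

/-- A Perron–Frobenius matrix: a square matrix with nonnegative integer entries
(entries in `ℕ`) such that some positive power has all entries strictly positive. -/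
def IsPerronFrobenius {n : ℕ} (A : Matrix (Fin n) (Fin n) ℕ) : Prop :=
  ∃ k : ℕ, 0 < k ∧ ∀ i j, 0 < (A ^ k) i j

/-- The spectral radius `λ(A)` of a nonnegative integer matrix, defined as the
spectral radius of the matrix obtained by casting its entries into `ℂ`. -/
noncomputable def matrixSpectralRadius {n : ℕ} (A : Matrix (Fin n) (Fin n) ℕ) : ℝ≥0∞ :=
  spectralRadius ℂ (A.map (Nat.cast : ℕ → ℂ))

/-!
Write `r v = ∑ j, A v j` for the out-degrees; they are all `≥ 1`. Extending the walks of length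
`t` out of `i` by one step, each vertex `v` reached at time `t` contributes at least `r v - 1`
additional walks. Every vertex is first reached from `i` at some time `< n`, so there are at
least `W = 1 + ∑ v, (r v - 1)` walks of length `n` out of `i`. Hence every row sum of
`A ^ (n * k)` is at least `W ^ k`, so is its ℓ∞ operator norm, and Gelfand's formula gives
`W ≤ λ(A ^ n) = λ(A) ^ n`.
-/

open Finset Filter
open scoped NNReal

namespace spectrum

variable {A : Type*} [NormedRing A] [NormedAlgebra ℂ A] [CompleteSpace A]

theorem spectralRadius_pow [Nontrivial A] (a : A) (n : ℕ) :
    spectralRadius ℂ (a ^ n) = spectralRadius ℂ a ^ n := by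
  refine le_antisymm (iSup₂_le fun z hz => ?_) (spectralRadius_pow_le' a n)
  obtain ⟨k, hk, rfl⟩ := spectrum.map_pow a n ▸ hz
  rw [nnnorm_pow, ENNReal.coe_pow]
  exact pow_le_pow_left₀ bot_le
    (le_iSup₂ (f := fun k (_ : k ∈ spectrum ℂ a) => (‖k‖₊ : ℝ≥0∞)) k hk) n

theorem le_spectralRadius_of_pow_le_nnnorm_pow (a : A) {c : ℝ≥0}
    (h : ∀ k : ℕ, c ^ k ≤ ‖a ^ k‖₊) : (c : ℝ≥0∞) ≤ spectralRadius ℂ a := by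
  refine ge_of_tendsto (pow_nnnorm_pow_one_div_tendsto_nhds_spectralRadius a) ?_
  filter_upwards [eventually_ne_atTop 0] with k hk
  calc (c : ℝ≥0∞) = ((c : ℝ≥0∞) ^ k) ^ (1 / k : ℝ) := by
        rw [← ENNReal.rpow_natCast, ← ENNReal.rpow_mul, mul_one_div_cancel (by exact_mod_cast hk),
          ENNReal.rpow_one]
    _ ≤ (‖a ^ k‖₊ : ℝ≥0∞) ^ (1 / k : ℝ) := by gcongr; exact_mod_cast h k

end spectrum

namespace Matrix

variable {ι : Type*} [Fintype ι]

theorem sum_mul_apply {α l m n : Type*} [NonUnitalNonAssocSemiring α] [Fintype m] [Fintype n]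
    (M : Matrix l m α) (N : Matrix m n α) (i : l) :
    ∑ j, (M * N) i j = ∑ v, M i v * ∑ j, N v j := by
  simp only [mul_apply, mul_sum]
  exact sum_comm

theorem mul_apply_pos_iff (M N : Matrix ι ι ℕ) (i k : ι) :
    0 < (M * N) i k ↔ ∃ j, 0 < M i j ∧ 0 < N j k := by
  simp [mul_apply, Finset.sum_pos_iff, Nat.pos_iff_ne_zero]

variable [DecidableEq ι]

theorem pow_le_sum_pow_apply {B : Matrix ι ι ℕ} {c : ℕ} (h : ∀ i, c ≤ ∑ j, B i j) (k : ℕ)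
    (i : ι) : c ^ k ≤ ∑ j, (B ^ k) i j := by
  induction k generalizing i with
  | zero => simp [one_apply]
  | succ k ih =>
    rw [pow_succ', pow_succ', sum_mul_apply]
    calc c * c ^ k ≤ (∑ v, B i v) * c ^ k := by gcongr; exact h i
      _ = ∑ v, B i v * c ^ k := Finset.sum_mul ..
      _ ≤ ∑ v, B i v * ∑ j, (B ^ k) v j := by gcongr with v; exact ih v

section LinftyOpNorm

/- The spectral radius is defined algebraically, so it may be estimated through any Banach algebra
norm; the ℓ∞ operator norm is the one that sees row sums. -/
attribute [local instance] Matrix.linftyOpNormedRing Matrix.linftyOpNormedAlgebra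

theorem sum_apply_le_linfty_opNNNorm_map_natCast (B : Matrix ι ι ℕ) (i : ι) :
    ((∑ j, B i j : ℕ) : ℝ≥0) ≤ ‖B.map (Nat.cast : ℕ → ℂ)‖₊ := by
  rw [linfty_opNNNorm_def]
  convert Finset.le_sup (f := fun i => ∑ j, ‖B.map (Nat.cast : ℕ → ℂ) i j‖₊) (mem_univ i)
  simp

theorem le_spectralRadius_map_natCast [Nonempty ι] {B : Matrix ι ι ℕ} {c : ℕ}
    (h : ∀ i, c ≤ ∑ j, B i j) : (c : ℝ≥0∞) ≤ spectralRadius ℂ (B.map (Nat.cast : ℕ → ℂ)) := by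
  refine spectrum.le_spectralRadius_of_pow_le_nnnorm_pow _ fun k => ?_
  obtain ⟨i⟩ := ‹Nonempty ι›
  calc (c : ℝ≥0) ^ k = ((c ^ k : ℕ) : ℝ≥0) := by push_cast; rfl
    _ ≤ ((∑ j, (B ^ k) i j : ℕ) : ℝ≥0) := by exact_mod_cast pow_le_sum_pow_apply h k i
    _ ≤ ‖(B ^ k).map (Nat.cast : ℕ → ℂ)‖₊ := sum_apply_le_linfty_opNNNorm_map_natCast _ i
    _ = ‖B.map (Nat.cast : ℕ → ℂ) ^ k‖₊ := congrArg _ (B.map_pow (Nat.castRingHom ℂ) k)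

theorem spectralRadius_pow [Nonempty ι] (M : Matrix ι ι ℂ) (k : ℕ) :
    spectralRadius ℂ (M ^ k) = spectralRadius ℂ M ^ k :=
  spectrum.spectralRadius_pow M k

end LinftyOpNorm

section Reachability

variable (A : Matrix ι ι ℕ) (i : ι)

def reachableBefore (t : ℕ) : Finset ι := {j | ∃ s < t, 0 < (A ^ s) i j}

variable {A i}

theorem mem_reachableBefore {t : ℕ} {j : ι} :
    j ∈ reachableBefore A i t ↔ ∃ s < t, 0 < (A ^ s) i j := by
  simp [reachableBefore]

theorem reachableBefore_mono : Monotone (reachableBefore A i) := fun _ _ htt' _ hj =>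
  have ⟨s, hs, hpos⟩ := mem_reachableBefore.mp hj
  mem_reachableBefore.mpr ⟨s, hs.trans_le htt', hpos⟩

theorem reachableBefore_succ_sdiff_subset (t : ℕ) :
    reachableBefore A i (t + 1) \ reachableBefore A i t ⊆ ({j | 0 < (A ^ t) i j} : Finset ι) := by
  intro j hj
  obtain ⟨⟨s, hs, hpos⟩, hnot⟩ := Finset.mem_sdiff.mp hj |>.imp mem_reachableBefore.mp id
  obtain rfl : s = t := by
    by_contra hst
    exact hnot (mem_reachableBefore.mpr ⟨s, by omega, hpos⟩)
  simpa using hpos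

theorem mem_of_pow_apply_pos_of_forall_mem {S : Finset ι} (hi : i ∈ S)
    (hS : ∀ j ∈ S, ∀ u, 0 < A j u → u ∈ S) (s : ℕ) {j : ι} (hj : 0 < (A ^ s) i j) : j ∈ S := by
  induction s generalizing j with
  | zero =>
    obtain rfl : i = j := by by_contra h; simp [one_apply_ne h] at hj
    exact hi
  | succ s ih =>
    obtain ⟨v, hv, hvj⟩ := (mul_apply_pos_iff _ _ _ _).mp (pow_succ A s ▸ hj)
    exact hS v (ih hv) j hvj

theorem reachableBefore_eq_univ_or_le_card (hreach : ∀ j, ∃ s, 0 < (A ^ s) i j) (t : ℕ) :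
    reachableBefore A i t = univ ∨ t ≤ #(reachableBefore A i t) := by
  induction t with
  | zero => simp
  | succ t ih =>
    by_cases hfull : reachableBefore A i t = univ
    · exact .inl (eq_univ_of_forall fun j => reachableBefore_mono t.le_succ (hfull ▸ mem_univ j))
    refine .inr (Nat.succ_le_of_lt ((ih.resolve_left hfull).trans_lt (card_lt_card ?_)))
    -- A set that stops growing is closed under out-edges, so it contains everything reachable.
    refine (reachableBefore_mono t.le_succ).ssubset_of_ne fun heq => hfull ?_
    have hi : i ∈ reachableBefore A i t := heq ▸ mem_reachableBefore.mpr ⟨0, t.succ_pos, by simp⟩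
    refine eq_univ_of_forall fun j => ?_
    obtain ⟨s, hs⟩ := hreach j
    refine mem_of_pow_apply_pos_of_forall_mem hi (fun v hv u hvu => ?_) s hs
    obtain ⟨s', hs', hpos⟩ := mem_reachableBefore.mp hv
    refine heq ▸ mem_reachableBefore.mpr ⟨s' + 1, by omega, ?_⟩
    rw [pow_succ]
    exact (mul_apply_pos_iff _ _ _ _).mpr ⟨v, hpos, hvu⟩

theorem reachableBefore_card_eq_univ (hreach : ∀ j, ∃ s, 0 < (A ^ s) i j) :
    reachableBefore A i (Fintype.card ι) = univ :=
  (reachableBefore_eq_univ_or_le_card hreach _).elim id fun h =>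
    eq_univ_of_card _ (le_antisymm (card_le_univ _) h)

theorem sum_pow_apply_add_le_sum_pow_succ_apply (hdeg : ∀ v, 1 ≤ ∑ j, A v j) (t : ℕ) :
    ∑ j, (A ^ t) i j + ∑ v ∈ {v | 0 < (A ^ t) i v}, (∑ j, A v j - 1) ≤
      ∑ j, (A ^ (t + 1)) i j := by
  have hsplit : ∀ v, (A ^ t) i v * ∑ j, A v j = (A ^ t) i v + (A ^ t) i v * (∑ j, A v j - 1) :=
    fun v => by rw [← mul_one_add, Nat.add_sub_cancel' (hdeg v)]
  rw [pow_succ, sum_mul_apply, Finset.sum_congr rfl fun v _ => hsplit v, sum_add_distrib,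
    sum_filter]
  gcongr with v
  split_ifs with hv
  exacts [Nat.le_mul_of_pos_left _ hv, Nat.zero_le _]

theorem one_add_sum_reachableBefore_le (hdeg : ∀ v, 1 ≤ ∑ j, A v j) (t : ℕ) :
    1 + ∑ v ∈ reachableBefore A i t, (∑ j, A v j - 1) ≤ ∑ j, (A ^ t) i j := by
  induction t with
  | zero => simp [reachableBefore, one_apply]
  | succ t ih =>
    rw [← sum_sdiff (reachableBefore_mono t.le_succ), add_comm (∑ v ∈ _ \ _, _), ← add_assoc]
    calc _ ≤ ∑ j, (A ^ t) i j + ∑ v ∈ {v | 0 < (A ^ t) i v}, (∑ j, A v j - 1) :=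
          add_le_add ih (sum_le_sum_of_subset (reachableBefore_succ_sdiff_subset t))
      _ ≤ _ := sum_pow_apply_add_le_sum_pow_succ_apply hdeg t

theorem one_add_sum_tsub_one_le_sum_pow_card_apply (hdeg : ∀ v, 1 ≤ ∑ j, A v j)
    (hreach : ∀ j, ∃ s, 0 < (A ^ s) i j) :
    1 + ∑ v, (∑ j, A v j - 1) ≤ ∑ j, (A ^ Fintype.card ι) i j := by
  have := one_add_sum_reachableBefore_le (i := i) hdeg (Fintype.card ι)
  rwa [reachableBefore_card_eq_univ hreach] at this

end Reachability

end Matrix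

namespace IsPerronFrobenius

variable {n : ℕ} {A : Matrix (Fin n) (Fin n) ℕ}

theorem one_le_sum_apply (hA : IsPerronFrobenius A) (i : Fin n) : 1 ≤ ∑ j, A i j := by
  obtain ⟨k, hk, hpos⟩ := hA
  obtain ⟨k, rfl⟩ := Nat.exists_eq_add_one_of_ne_zero hk.ne'
  obtain ⟨j, hij, -⟩ := (Matrix.mul_apply_pos_iff _ _ _ _).mp (pow_succ' A k ▸ hpos i i)
  exact hij.trans_le (single_le_sum (fun _ _ => Nat.zero_le _) (mem_univ j))

end IsPerronFrobenius

/-- (Ham–Song) For an `n × n` Perron–Frobenius matrix `A` with `n ≥ 1`,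
`1 + (∑_{i,j} A_{ij}) − n ≤ λ(A)^n`. -/
theorem ham_song_inequality {n : ℕ} (hn : 1 ≤ n) (A : Matrix (Fin n) (Fin n) ℕ)
    (hA : IsPerronFrobenius A) :
    ((1 + ∑ i, ∑ j, A i j - n : ℕ) : ℝ≥0∞) ≤ matrixSpectralRadius A ^ n := by
  have : Nonempty (Fin n) := ⟨⟨0, hn⟩⟩
  have hdeg := hA.one_le_sum_apply
  obtain ⟨k, -, hpos⟩ := hA
  have hrow (i : Fin n) : 1 + ∑ v, (∑ j, A v j - 1) ≤ ∑ j, (A ^ n) i j := by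
    simpa using Matrix.one_add_sum_tsub_one_le_sum_pow_card_apply hdeg fun j => ⟨k, hpos i j⟩
  have hlhs : 1 + ∑ i, ∑ j, A i j - n = 1 + ∑ v, (∑ j, A v j - 1) := by
    rw [sum_tsub_distrib _ fun v _ => hdeg v]
    have := sum_le_sum fun v (_ : v ∈ univ) => hdeg v
    simp only [sum_const, card_univ, Fintype.card_fin, smul_eq_mul, mul_one] at this ⊢
    omega
  calc ((1 + ∑ i, ∑ j, A i j - n : ℕ) : ℝ≥0∞)
      ≤ spectralRadius ℂ ((A ^ n).map (Nat.cast : ℕ → ℂ)) :=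
        hlhs ▸ Matrix.le_spectralRadius_map_natCast hrow
    _ = matrixSpectralRadius A ^ n := by
      rw [matrixSpectralRadius, ← Matrix.spectralRadius_pow]
      exact congrArg _ (A.map_pow (Nat.castRingHom ℂ) n)
end

section
/- Let n ≥ 1, let A be an n×n Perron–Frobenius matrix, and let E = ∑_{i,j} A_{ij} be the sum of all entries of A. Then for every index i, the i-th row sum of A^n satisfies ∑_j (A^n)_{ij} ≥ E − (n − 1), and likewise every column sum of A^n satisfies ∑_i (A^n)_{ij} ≥ E − (n − 1). -/
/-!
Every row of a Perron–Frobenius matrix is nonzero, so its row-sum vector is `A *ᵥ 1 = 1 + f`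
with `f u = ∑ v, A u v - 1` the excess of row `u`. Iterating gives the exact identity
`A ^ m *ᵥ 1 = 1 + (∑ t < m, A ^ t) *ᵥ f`. By Cayley–Hamilton, `A ^ k` is an integer combination
of the `A ^ t` with `t < n`, so an entry that is positive in some power is already positive in
one of them; hence all entries of `∑ t < n, A ^ t` are at least `1`, and every row sum of `A ^ n`
is at least `1 + ∑ u, f u = E - (n - 1)`. Column sums follow by transposing.
-/

open Finset Matrix Polynomial

namespace Matrix

variable {ι R : Type*} [Fintype ι] [DecidableEq ι]

theorem exists_lt_card_pow_apply_ne_zero [CommRing R] (A : Matrix ι ι R) {k : ℕ} {i j : ι}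
    (h : (A ^ k) i j ≠ 0) : ∃ t < Fintype.card ι, (A ^ t) i j ≠ 0 := by
  nontriviality R
  have : Nonempty ι := ⟨i⟩
  have hcharpoly : A.charpoly ≠ 1 := fun h1 => by
    simpa [h1, eq_comm] using A.charpoly_natDegree_eq_dim
  have hdeg := natDegree_modByMonic_lt (X ^ k) A.charpoly_monic hcharpoly
  rw [charpoly_natDegree_eq_dim] at hdeg
  by_contra! hzero
  rw [pow_eq_aeval_mod_charpoly, aeval_eq_sum_range' hdeg] at h
  refine h ?_
  rw [Matrix.sum_apply]
  exact sum_eq_zero fun t ht => by simp [hzero t (mem_range.1 ht)]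

theorem exists_lt_card_pow_apply_pos (A : Matrix ι ι ℕ) {k : ℕ} {i j : ι}
    (h : 0 < (A ^ k) i j) : ∃ t < Fintype.card ι, 0 < (A ^ t) i j := by
  have hint : ((A.map (Nat.castRingHom ℤ)) ^ k) i j ≠ 0 := by
    rw [← Matrix.map_pow, map_apply]
    simpa using h.ne'
  obtain ⟨t, ht, hne⟩ := exists_lt_card_pow_apply_ne_zero _ hint
  rw [← Matrix.map_pow, map_apply] at hne
  exact ⟨t, ht, Nat.pos_of_ne_zero (by simpa using hne)⟩

theorem pow_mulVec_eq_add_geom_sum_mulVec [Semiring R] (A : Matrix ι ι R) {v w : ι → R}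
    (h : A *ᵥ v = v + w) (m : ℕ) :
    A ^ m *ᵥ v = v + (∑ t ∈ range m, A ^ t) *ᵥ w := by
  induction m with
  | zero => simp
  | succ m ih =>
    rw [pow_succ, ← mulVec_mulVec, h, mulVec_add, ih, sum_range_succ, add_mulVec, add_assoc]

theorem sum_apply_pos_of_pow_apply_pos (A : Matrix ι ι ℕ) {k : ℕ} (hk : 0 < k) {i j : ι}
    (h : 0 < (A ^ k) i j) : 0 < ∑ l, A i l := by
  rw [← Nat.succ_pred_eq_of_pos hk, pow_succ', mul_apply, sum_pos_iff] at h
  obtain ⟨l, -, hl⟩ := h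
  exact sum_pos_iff.2 ⟨l, mem_univ l, pos_of_mul_pos_left hl (Nat.zero_le _)⟩

theorem sum_sum_sub_le_sum_pow_card_apply (A : Matrix ι ι ℕ) (hrow : ∀ u, 0 < ∑ v, A u v)
    {i : ι} (hreach : ∀ j, ∃ k, 0 < (A ^ k) i j) :
    ∑ u, ∑ v, A u v - (Fintype.card ι - 1) ≤ ∑ j, (A ^ Fintype.card ι) i j := by
  set f : ι → ℕ := fun u => ∑ v, A u v - 1
  set S : Matrix ι ι ℕ := ∑ t ∈ range (Fintype.card ι), A ^ t with hS_def
  have hA1 : A *ᵥ 1 = 1 + f := by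
    ext u
    have := hrow u
    simp only [mulVec, dotProduct, Pi.one_apply, mul_one, Pi.add_apply, f]
    omega
  have hS : ∀ u, 1 ≤ S i u := by
    intro u
    obtain ⟨k, hk⟩ := hreach u
    obtain ⟨t, ht, hpos⟩ := exists_lt_card_pow_apply_pos A hk
    rw [hS_def, Matrix.sum_apply]
    exact hpos.trans_le
      (single_le_sum (f := fun t => (A ^ t) i u) (fun _ _ => Nat.zero_le _) (mem_range.2 ht))
  have hrowsum : ∑ j, (A ^ Fintype.card ι) i j = 1 + ∑ u, S i u * f u := by
    simpa [mulVec, dotProduct] using congrFun (pow_mulVec_eq_add_geom_sum_mulVec A hA1 _) i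
  have hfsum : ∑ u, f u = ∑ u, ∑ v, A u v - Fintype.card ι := by
    rw [sum_tsub_distrib _ fun u _ => hrow u]
    simp
  calc ∑ u, ∑ v, A u v - (Fintype.card ι - 1) ≤ 1 + ∑ u, f u := by omega
    _ ≤ 1 + ∑ u, S i u * f u := by
      gcongr with u
      exact Nat.le_mul_of_pos_left _ (hS u)
    _ = ∑ j, (A ^ Fintype.card ι) i j := hrowsum.symm

theorem sum_sum_sub_le_sum_pow_card_apply_of_pow_pos (A : Matrix ι ι ℕ) {k : ℕ} (hk : 0 < k)
    (hpos : ∀ i j, 0 < (A ^ k) i j) (i : ι) :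
    ∑ u, ∑ v, A u v - (Fintype.card ι - 1) ≤ ∑ j, (A ^ Fintype.card ι) i j :=
  sum_sum_sub_le_sum_pow_card_apply A (fun u => sum_apply_pos_of_pow_apply_pos A hk (hpos u u))
    fun j => ⟨k, hpos i j⟩

end Matrix

theorem row_col_sums_of_power_ge_general {n : ℕ} (A : Matrix (Fin n) (Fin n) ℕ)
    (hA : IsPerronFrobenius A) (E : ℕ) (hE : E = ∑ i, ∑ j, A i j) :
    (∀ i, E - (n - 1) ≤ ∑ j, (A ^ n) i j) ∧ (∀ j, E - (n - 1) ≤ ∑ i, (A ^ n) i j) := by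
  obtain ⟨k, hk, hpos⟩ := hA
  have hposT : ∀ i j, 0 < (Aᵀ ^ k) i j := fun i j => by
    rw [← transpose_pow]
    exact hpos j i
  subst hE
  refine ⟨fun i => ?_, fun j => ?_⟩
  · simpa using sum_sum_sub_le_sum_pow_card_apply_of_pow_pos A hk hpos i
  · simpa [← transpose_pow, Finset.sum_comm (γ := Fin n)] using
      sum_sum_sub_le_sum_pow_card_apply_of_pow_pos Aᵀ hk hposT j

/-- For an `n × n` Perron–Frobenius matrix `A` with `n ≥ 1` and total entry sum
`E = ∑_{i,j} A_{ij}`, every row sum and every column sum of `A^n` is at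
least `E − (n − 1)`. -/
theorem row_col_sums_of_power_ge {n : ℕ} (hn : 1 ≤ n) (A : Matrix (Fin n) (Fin n) ℕ)
    (hA : IsPerronFrobenius A) (E : ℕ) (hE : E = ∑ i, ∑ j, A i j) :
    (∀ i, E - (n - 1) ≤ ∑ j, (A ^ n) i j) ∧ (∀ j, E - (n - 1) ≤ ∑ i, (A ^ n) i j) :=
  row_col_sums_of_power_ge_general A hA E hE
end

section
/- Let n ≥ 1 and let A be an n×n Perron–Frobenius matrix with spectral radius λ(A). Then every row sum of A satisfies ∑_j A_{ij} ≤ λ(A)^n, and every column sum satisfies ∑_i A_{ij} ≤ λ(A)^n. -/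
/-!
Fix a row `i`. Primitivity lets every `j` reach `i` in at most `n - 1` steps, so every first
step `i → j` closes up to a loop at `i` of length at most `n`. Concatenating `t` such loops
shows that `(∑ j, A i j) ^ t` is at most the number of closed walks at `i` of length at most
`t n`, hence at most `∑_{E ≤ t n} tr (A ^ E) ≤ (t n + 1) n λ ^ (t n)`, because `tr (A ^ E)` is
the sum of the `E`-th powers of the `n` eigenvalues. Taking `t`-th roots as `t → ∞` gives
`∑ j, A i j ≤ λ ^ n`; column sums are row sums of `Aᵀ`.
-/

open scoped ENNReal

open Polynomial Finset Filter Topology Matrix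

theorem le_of_forall_pow_le_mul_pow {a b c d : ℝ} (hb : 0 ≤ b)
    (h : ∀ t : ℕ, a ^ t ≤ (c * t + d) * b ^ t) : a ≤ b := by
  by_contra! hab
  have ha : 0 < a := hb.trans_lt hab
  have hq₀ : 0 ≤ b / a := div_nonneg hb ha.le
  have hq₁ : b / a < 1 := (div_lt_one ha).2 hab
  have hlim : Tendsto (fun t : ℕ => (c * t + d) * (b / a) ^ t) atTop (𝓝 0) := by
    simpa [add_mul, mul_assoc] using
      ((tendsto_self_mul_const_pow_of_lt_one hq₀ hq₁).const_mul c).add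
        ((tendsto_pow_atTop_nhds_zero_of_lt_one hq₀ hq₁).const_mul d)
  obtain ⟨t, ht⟩ := (hlim.eventually (gt_mem_nhds one_pos)).exists
  rw [div_pow, ← mul_div_assoc, div_lt_one (by positivity)] at ht
  exact (h t).not_gt ht

namespace Matrix

variable {ι : Type*} [Fintype ι] [DecidableEq ι]

theorem exists_pow_apply_ne_zero_of_lt_card {R : Type*} [CommRing R] (M : Matrix ι ι R)
    {k : ℕ} {x y : ι} (h : (M ^ k) x y ≠ 0) : ∃ m < Fintype.card ι, (M ^ m) x y ≠ 0 := by
  by_contra! hlow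
  -- Cayley–Hamilton: `M ^ k` is a combination of `M ^ m` with `m < card ι`.
  have : Nontrivial R := ⟨⟨_, _, h⟩⟩
  have : Nonempty ι := ⟨x⟩
  have hdeg : (X ^ k %ₘ M.charpoly).natDegree < Fintype.card ι := by
    simpa using natDegree_modByMonic_lt (X ^ k) M.charpoly_monic
      (fun h1 => by simpa using congrArg natDegree h1)
  rw [pow_eq_aeval_mod_charpoly, aeval_eq_sum_range' hdeg] at h
  simp only [sum_apply, smul_apply, smul_eq_mul] at h
  exact h (sum_eq_zero fun m hm => by rw [hlow m (mem_range.1 hm), mul_zero])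

section NatMatrix

variable (A : Matrix ι ι ℕ)

theorem exists_pow_apply_pos_of_lt_card {k : ℕ} {x y : ι} (h : 0 < (A ^ k) x y) :
    ∃ m < Fintype.card ι, 0 < (A ^ m) x y := by
  have hmap (m : ℕ) : (A.map (Nat.castRingHom ℤ) ^ m) x y = (A ^ m) x y := by
    rw [← Matrix.map_pow]; rfl
  obtain ⟨m, hm, hne⟩ :=
    exists_pow_apply_ne_zero_of_lt_card _ (show (A.map (Nat.castRingHom ℤ) ^ k) x y ≠ 0 by
      rw [hmap]; omega)
  exact ⟨m, hm, by rw [hmap] at hne; omega⟩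

theorem pow_apply_mul_pow_apply_le (a b : ℕ) (x y z : ι) :
    (A ^ a) x z * (A ^ b) z y ≤ (A ^ (a + b)) x y := by
  rw [pow_add, mul_apply]
  exact single_le_sum (f := fun t => (A ^ a) x t * (A ^ b) t y) (fun _ _ => Nat.zero_le _)
    (mem_univ z)

theorem rowSum_mul_sum_pow_apply_le {i : ι} {L : ℕ} (hL : ∀ j, ∃ m ≤ L, 0 < (A ^ m) j i)
    (T : ℕ) :
    (∑ j, A i j) * ∑ E ∈ range T, (A ^ E) i i ≤ ∑ E ∈ range (T + L + 1), (A ^ E) i i := by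
  choose m hmL hm using hL
  have hshift (j : ι) : ∑ E ∈ range T, (A ^ E) i i ≤ ∑ E ∈ range (L + T), (A ^ E) j i :=
    calc ∑ E ∈ range T, (A ^ E) i i
        ≤ ∑ E ∈ range T, (A ^ (m j + E)) j i := sum_le_sum fun E _ =>
          (Nat.le_mul_of_pos_left _ (hm j)).trans (pow_apply_mul_pow_apply_le A _ _ j i i)
      _ ≤ ∑ E ∈ range (m j + T), (A ^ E) j i := by rw [sum_range_add]; exact le_add_self
      _ ≤ ∑ E ∈ range (L + T), (A ^ E) j i :=
          sum_le_sum_of_subset (range_subset_range.2 (by grind))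
  calc (∑ j, A i j) * ∑ E ∈ range T, (A ^ E) i i
      ≤ ∑ j, A i j * ∑ E ∈ range (L + T), (A ^ E) j i := by
        rw [sum_mul]; gcongr with j; exact hshift j
    _ = ∑ E ∈ range (L + T), (A ^ (E + 1)) i i := by
        simp only [mul_sum, pow_succ', mul_apply]; exact sum_comm
    _ ≤ ∑ E ∈ range (T + L + 1), (A ^ E) i i := by
        rw [sum_range_succ' _ (T + L), add_comm T L]; exact le_self_add

theorem rowSum_pow_le_sum_pow_apply {i : ι} {L : ℕ} (hL : ∀ j, ∃ m ≤ L, 0 < (A ^ m) j i)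
    (t : ℕ) : (∑ j, A i j) ^ t ≤ ∑ E ∈ range (t * (L + 1) + 1), (A ^ E) i i := by
  induction t with
  | zero => simp
  | succ t ih =>
    calc (∑ j, A i j) ^ (t + 1) = (∑ j, A i j) * (∑ j, A i j) ^ t := pow_succ' _ _
      _ ≤ (∑ j, A i j) * ∑ E ∈ range (t * (L + 1) + 1), (A ^ E) i i := by gcongr
      _ ≤ ∑ E ∈ range ((t + 1) * (L + 1) + 1), (A ^ E) i i := by
        convert rowSum_mul_sum_pow_apply_le A hL _ using 3; ring

end NatMatrix

section Spectrum

variable {K : Type*} [NormedField K] [IsAlgClosed K] {M : Matrix ι ι K} {r : ℝ}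

theorem norm_le_pow_of_mem_spectrum_pow (hr : ∀ μ ∈ spectrum K M, ‖μ‖ ≤ r) {E : ℕ} {ν : K}
    (hν : ν ∈ spectrum K (M ^ E)) : ‖ν‖ ≤ r ^ E := by
  obtain rfl | hE := E.eq_zero_or_pos
  · have : Nontrivial (Matrix ι ι K) := by
      by_contra h
      rw [not_nontrivial_iff_subsingleton] at h
      simp [spectrum.of_subsingleton] at hν
    rw [pow_zero, spectrum.one_eq, Set.mem_singleton_iff] at hν
    simp [hν]
  · rw [spectrum.map_pow_of_pos M hE] at hν
    obtain ⟨μ, hμ, rfl⟩ := hν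
    rw [norm_pow]
    exact pow_le_pow_left₀ (norm_nonneg μ) (hr μ hμ) E

theorem norm_trace_pow_le (hr : ∀ μ ∈ spectrum K M, ‖μ‖ ≤ r) (E : ℕ) :
    ‖(M ^ E).trace‖ ≤ Fintype.card ι * r ^ E := by
  have hcard : (M ^ E).charpoly.roots.card = Fintype.card ι := by
    rw [(splits_iff_card_roots).1 (IsAlgClosed.splits _), charpoly_natDegree_eq_dim]
  rw [trace_eq_sum_roots_charpoly]
  calc ‖(M ^ E).charpoly.roots.sum‖
      ≤ ((M ^ E).charpoly.roots.map (‖·‖)).sum := norm_multiset_sum_le _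
    _ ≤ ((M ^ E).charpoly.roots.map (‖·‖)).card • r ^ E := by
        refine Multiset.sum_le_card_nsmul _ _ fun x hx => ?_
        obtain ⟨ν, hν, rfl⟩ := Multiset.mem_map.1 hx
        exact norm_le_pow_of_mem_spectrum_pow hr
          (mem_spectrum_iff_isRoot_charpoly.2 (isRoot_of_mem_roots hν))
    _ = Fintype.card ι * r ^ E := by rw [Multiset.card_map, hcard, nsmul_eq_mul]

theorem exists_mem_spectrum_forall_norm_le [Nonempty ι] (M : Matrix ι ι K) :
    ∃ μ ∈ spectrum K M, ∀ ν ∈ spectrum K M, ‖ν‖ ≤ ‖μ‖ :=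
  Set.exists_max_image _ _ M.finite_spectrum
    (spectrum.nonempty_of_isAlgClosed_of_finiteDimensional K M)

end Spectrum

theorem natCast_trace_pow_le (A : Matrix ι ι ℕ) {r : ℝ}
    (hr : ∀ μ ∈ spectrum ℂ (A.map (Nat.cast : ℕ → ℂ)), ‖μ‖ ≤ r) (E : ℕ) :
    ((A ^ E).trace : ℝ) ≤ Fintype.card ι * r ^ E := by
  have hcast : (A.map (Nat.cast : ℕ → ℂ) ^ E).trace = ((A ^ E).trace : ℂ) := by
    rw [← Nat.coe_castRingHom, ← Matrix.map_pow, ← AddMonoidHom.map_trace]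
  simpa [hcast] using norm_trace_pow_le hr E

theorem natCast_pow_apply_self_le (A : Matrix ι ι ℕ) {r : ℝ}
    (hr : ∀ μ ∈ spectrum ℂ (A.map (Nat.cast : ℕ → ℂ)), ‖μ‖ ≤ r) (E : ℕ) (i : ι) :
    ((A ^ E) i i : ℝ) ≤ Fintype.card ι * r ^ E :=
  calc ((A ^ E) i i : ℝ) ≤ ((A ^ E).trace : ℕ) := by
        exact_mod_cast single_le_sum (f := fun j => (A ^ E) j j) (fun _ _ => Nat.zero_le _)
          (mem_univ i)
    _ ≤ Fintype.card ι * r ^ E := natCast_trace_pow_le A hr E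

end Matrix

theorem IsPerronFrobenius.transpose {n : ℕ} {A : Matrix (Fin n) (Fin n) ℕ}
    (hA : IsPerronFrobenius A) : IsPerronFrobenius Aᵀ :=
  let ⟨k, hk, hpos⟩ := hA
  ⟨k, hk, fun i j => by rw [← transpose_pow]; exact hpos j i⟩

theorem matrixSpectralRadius_transpose {n : ℕ} (A : Matrix (Fin n) (Fin n) ℕ) :
    matrixSpectralRadius Aᵀ = matrixSpectralRadius A := by
  have : spectrum ℂ (Aᵀ.map (Nat.cast : ℕ → ℂ)) = spectrum ℂ (A.map (Nat.cast : ℕ → ℂ)) := by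
    ext μ
    simp only [transpose_map, mem_spectrum_iff_isRoot_charpoly, charpoly_transpose]
  simp only [matrixSpectralRadius, spectralRadius, this]

theorem IsPerronFrobenius.one_le_of_forall_norm_le {n : ℕ} (hn : 1 ≤ n)
    {A : Matrix (Fin n) (Fin n) ℕ} (hA : IsPerronFrobenius A) {r : ℝ} (hr₀ : 0 ≤ r)
    (hr : ∀ μ ∈ spectrum ℂ (A.map (Nat.cast : ℕ → ℂ)), ‖μ‖ ≤ r) : 1 ≤ r := by
  obtain ⟨k, hk, hpos⟩ := hA
  have htrace : n ≤ (A ^ k).trace := by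
    simpa [trace] using card_nsmul_le_sum univ (fun j => (A ^ k) j j) 1 fun j _ => hpos j j
  have hn' : (0 : ℝ) < n := by exact_mod_cast hn
  have hrk : n * 1 ≤ n * r ^ k := by
    simpa using (Nat.cast_le.2 htrace).trans (natCast_trace_pow_le A hr k)
  exact (one_le_pow_iff_of_nonneg hr₀ hk.ne').1 (le_of_mul_le_mul_left hrk hn')

theorem rowSum_le_matrixSpectralRadius_pow {n : ℕ} (hn : 1 ≤ n)
    {A : Matrix (Fin n) (Fin n) ℕ} (hA : IsPerronFrobenius A) (i : Fin n) :
    ((∑ j, A i j : ℕ) : ℝ≥0∞) ≤ matrixSpectralRadius A ^ n := by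
  have : Nonempty (Fin n) := ⟨⟨0, hn⟩⟩
  obtain ⟨μ, hμ, hmax⟩ := exists_mem_spectrum_forall_norm_le (A.map (Nat.cast : ℕ → ℂ))
  have hr₁ : 1 ≤ ‖μ‖ := hA.one_le_of_forall_norm_le hn (norm_nonneg μ) hmax
  have hpath (j : Fin n) : ∃ m ≤ n - 1, 0 < (A ^ m) j i := by
    obtain ⟨k, -, hpos⟩ := hA
    obtain ⟨m, hm, hm_pos⟩ := exists_pow_apply_pos_of_lt_card A (hpos j i)
    exact ⟨m, by rw [Fintype.card_fin] at hm; omega, hm_pos⟩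
  have hgrowth (t : ℕ) :
      ((∑ j, A i j : ℕ) : ℝ) ^ t ≤ ((n : ℝ) ^ 2 * t + n) * (‖μ‖ ^ n) ^ t := by
    have hcount := rowSum_pow_le_sum_pow_apply A hpath t
    rw [Nat.sub_add_cancel hn] at hcount
    calc ((∑ j, A i j : ℕ) : ℝ) ^ t ≤ ∑ E ∈ range (t * n + 1), ((A ^ E) i i : ℝ) := by
          exact_mod_cast hcount
      _ ≤ ∑ E ∈ range (t * n + 1), (n : ℝ) * ‖μ‖ ^ (t * n) := by
          refine sum_le_sum fun E hE => ?_
          grw [natCast_pow_apply_self_le A hmax E i, Fintype.card_fin]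
          gcongr
          exact Nat.lt_succ_iff.1 (mem_range.1 hE)
      _ = ((n : ℝ) ^ 2 * t + n) * (‖μ‖ ^ n) ^ t := by
          rw [sum_const, card_range, nsmul_eq_mul, ← pow_mul]; push_cast; ring
  have hS : ((∑ j, A i j : ℕ) : ℝ) ≤ ‖μ‖ ^ n := le_of_forall_pow_le_mul_pow (by positivity) hgrowth
  have hμρ : (‖μ‖₊ : ℝ≥0∞) ≤ matrixSpectralRadius A :=
    le_iSup₂ (f := fun k (_ : k ∈ spectrum ℂ (A.map (Nat.cast : ℕ → ℂ))) => (‖k‖₊ : ℝ≥0∞)) μ hμ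
  calc ((∑ j, A i j : ℕ) : ℝ≥0∞) ≤ (‖μ‖₊ : ℝ≥0∞) ^ n := by
        rw [← ENNReal.coe_pow, ← ENNReal.coe_natCast, ENNReal.coe_le_coe, ← NNReal.coe_le_coe]
        exact_mod_cast hS
    _ ≤ matrixSpectralRadius A ^ n := by gcongr

/-- For an `n × n` Perron–Frobenius matrix `A` with `n ≥ 1`, every row sum and
every column sum of `A` is at most `λ(A)^n`. -/
theorem row_col_sums_le_spectral_radius_pow {n : ℕ} (hn : 1 ≤ n)
    (A : Matrix (Fin n) (Fin n) ℕ) (hA : IsPerronFrobenius A) :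
    (∀ i, ((∑ j, A i j : ℕ) : ℝ≥0∞) ≤ matrixSpectralRadius A ^ n) ∧
      (∀ j, ((∑ i, A i j : ℕ) : ℝ≥0∞) ≤ matrixSpectralRadius A ^ n) := by
  refine ⟨rowSum_le_matrixSpectralRadius_pow hn hA, fun j => ?_⟩
  simpa [matrixSpectralRadius_transpose] using rowSum_le_matrixSpectralRadius_pow hn hA.transpose j
end

section
/- Let Q be a finite quiver with exactly n vertices and E arrows in total, and suppose Q is strongly connected: for every ordered pair of vertices (u, w) there is a directed path of positive length from u to w. Then for every vertex v, the number of directed paths of length n in Q starting at v (paths in the sense of quivers, where repetition of vertices and arrows is allowed) is at least E − n + 1. -/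
/-!
Take the geodesic spanning arborescence rooted at `v` (Mathlib's `geodesicSubtree`): it has at
most one arrow into each vertex other than `v`, hence at most `n - 1` arrows, and every vertex is
reached from `v` by tree arrows in fewer than `n` steps. For an arrow `e` outside the tree, follow
the tree path to the source of `e`, then `e`, then extend arbitrarily to length `n` (every vertex
has an outgoing arrow). The first non-tree arrow of this path is `e`, so distinct non-tree arrows
give distinct paths, and there are at least `E - (n - 1)` of them.
-/

namespace Quiver.Path

variable {V : Type*} [Quiver V]

def arrows {a : V} : ∀ {b : V}, Path a b → List (Σ x y : V, x ⟶ y)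
  | _, nil => []
  | _, cons p e => p.arrows ++ [⟨_, _, e⟩]

@[simp] theorem arrows_nil {a : V} : (nil : Path a a).arrows = [] := rfl

@[simp] theorem arrows_cons {a b c : V} (p : Path a b) (e : b ⟶ c) :
    (p.cons e).arrows = p.arrows ++ [⟨b, c, e⟩] := rfl

@[simp] theorem arrows_comp {a b c : V} (p : Path a b) (q : Path b c) :
    (p.comp q).arrows = p.arrows ++ q.arrows := by
  induction q with
  | nil => simp
  | cons q e ih => simp [ih]

theorem find?_arrows_cons_comp {S : Set (Σ x y : V, x ⟶ y)} [DecidablePred (· ∈ S)]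
    {a b c d : V} {p : Path a b} (hp : ∀ x ∈ p.arrows, x ∈ S) {e : b ⟶ c} (he : ⟨b, c, e⟩ ∉ S)
    (q : Path c d) : ((p.cons e).comp q).arrows.find? (· ∉ S) = some ⟨b, c, e⟩ := by
  rw [arrows_comp, arrows_cons, List.find?_append, List.find?_append,
    List.find?_eq_none.2 (by simpa using hp)]
  simp [he]

theorem finite_subtype_length_eq [Finite V] [∀ a b : V, Finite (a ⟶ b)] (a : V) :
    ∀ n, Finite {p : Σ b, Path a b // p.2.length = n}
  | 0 => Finite.of_surjective (fun _ : Unit => ⟨⟨a, nil⟩, rfl⟩) <| by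
    rintro ⟨⟨b, _ | _⟩, hp⟩
    · exact ⟨(), rfl⟩
    · simp at hp
  | n + 1 =>
    have := finite_subtype_length_eq a n
    Finite.of_surjective
      (fun x : Σ p : {p : Σ b, Path a b // p.2.length = n}, Σ c, p.1.1 ⟶ c =>
        ⟨⟨x.2.1, x.1.1.2.cons x.2.2⟩, by simp [x.1.2]⟩) <| by
      rintro ⟨⟨c, _ | ⟨p, e⟩⟩, hp⟩
      · simp at hp
      · exact ⟨⟨⟨⟨_, p⟩, by simpa using hp⟩, ⟨c, e⟩⟩, rfl⟩

theorem exists_length_eq (hout : ∀ a : V, ∃ b, Nonempty (a ⟶ b)) (a : V) :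
    ∀ n, ∃ p : Σ b, Path a b, p.2.length = n
  | 0 => ⟨⟨a, nil⟩, rfl⟩
  | n + 1 => by
    obtain ⟨⟨b, p⟩, hp⟩ := exists_length_eq hout a n
    obtain ⟨c, ⟨e⟩⟩ := hout b
    exact ⟨⟨c, p.cons e⟩, by simp [hp]⟩

theorem exists_vertices_nodup {a b : V} (p : Path a b) : ∃ q : Path a b, q.vertices.Nodup := by
  induction p with
  | nil => exact ⟨nil, by simp⟩
  | @cons b c p e ih =>
    obtain ⟨q, hq⟩ := ih
    by_cases hc : c ∈ q.vertices
    · obtain ⟨q₁, q₂, rfl⟩ := q.exists_eq_comp_of_mem_vertices hc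
      refine ⟨q₁, hq.sublist ?_⟩
      rw [vertices_comp]
      conv_lhs => rw [← dropLast_append_end_eq q₁]
      exact (List.singleton_sublist.2 (start_mem_vertices q₂)).append_left _
    · refine ⟨q.cons e, ?_⟩
      simp only [vertices_cons, List.concat_eq_append, List.nodup_append, hq, List.nodup_singleton,
        List.mem_singleton, true_and]
      rintro x hx _ rfl rfl
      exact hc hx

theorem length_lt_card_of_vertices_nodup [Finite V] {a b : V} {p : Path a b}
    (hp : p.vertices.Nodup) : p.length < Nat.card V := by
  have := Fintype.ofFinite V
  have := hp.length_le_card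
  rw [vertices_length, ← Nat.card_eq_fintype_card] at this
  omega

end Quiver.Path

namespace Quiver

variable {V : Type*} [Quiver V] (r : V) [RootedConnected r]

theorem shortestPath_length_lt_card [Finite V] (b : V) :
    (shortestPath r b).length < Nat.card V := by
  obtain ⟨q, hq⟩ := (shortestPath r b).exists_vertices_nodup
  exact (shortest_path_spec r q).trans_lt (Path.length_lt_card_of_vertices_nodup hq)

def geodesicArrows : Set (Σ a b : V, a ⟶ b) := {x | x.2.2 ∈ geodesicSubtree r x.1 x.2.1}

theorem exists_path_arrows_subset_geodesicArrows (b : V) :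
    ∃ p : Path r b, (∀ x ∈ p.arrows, x ∈ geodesicArrows r) ∧
      p.length ≤ (shortestPath r b).length := by
  induction h : (shortestPath r b).length using Nat.strong_induction_on generalizing b with
  | _ k ih =>
  cases hsp : shortestPath r b with
  | nil => exact ⟨.nil, by simp⟩
  | @cons a _ p e =>
    have hlt : (shortestPath r a).length < k := by
      rw [← h, hsp, Path.length_cons]
      exact Nat.lt_succ_of_le (shortest_path_spec r p)
    obtain ⟨q, hq, hlen⟩ := ih _ hlt _ rfl
    refine ⟨q.cons e, ?_, ?_⟩
    · simp only [Path.arrows_cons, List.mem_append, List.mem_singleton]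
      rintro x (hx | rfl)
      exacts [hq x hx, ⟨p, hsp⟩]
    · rw [Path.length_cons]; omega

theorem ncard_geodesicArrows_le [Finite V] : (geodesicArrows r).ncard ≤ Nat.card V - 1 := by
  calc (geodesicArrows r).ncard ≤ ({r}ᶜ : Set V).ncard := by
        refine Set.ncard_le_ncard_of_injOn (fun x => x.2.1) ?_ ?_
        · rintro ⟨a, b, e⟩ ⟨p, h⟩ rfl
          simpa [h] using shortest_path_spec _ (.nil : Path b b)
        · rintro ⟨a, b, e⟩ ⟨p, h⟩ ⟨a', b', e'⟩ ⟨p', h'⟩ rfl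
          cases h.symm.trans h'
          rfl
    _ = Nat.card V - 1 := by rw [Set.ncard_compl, Set.ncard_singleton]

theorem exists_path_length_eq_find?_arrows [Finite V] [DecidablePred (· ∈ geodesicArrows r)]
    (hout : ∀ a : V, ∃ b, Nonempty (a ⟶ b)) {n : ℕ} (hn : Nat.card V ≤ n)
    {x : Σ a b : V, a ⟶ b} (hx : x ∉ geodesicArrows r) :
    ∃ p : {p : Σ b, Path r b // p.2.length = n},
      p.1.2.arrows.find? (· ∉ geodesicArrows r) = some x := by
  obtain ⟨a, b, e⟩ := x
  obtain ⟨q, hq, hlen⟩ := exists_path_arrows_subset_geodesicArrows r a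
  have := shortestPath_length_lt_card r a
  obtain ⟨⟨c, t⟩, ht⟩ := Path.exists_length_eq hout b (n - (q.length + 1))
  exact ⟨⟨⟨c, (q.cons e).comp t⟩, by simp only [Path.length_comp, Path.length_cons, ht]; omega⟩,
    Path.find?_arrows_cons_comp hq hx t⟩

end Quiver

open Quiver

/-- Spanning-tree counting bound: in a finite strongly connected quiver with `n`
vertices and `E` arrows in total, the number of directed paths of length `n`
starting at any fixed vertex `v` is at least `E − n + 1`. -/
theorem card_paths_of_length_ge {V : Type*} [Quiver V] [Finite V]
    [∀ u w : V, Finite (u ⟶ w)] {n E : ℕ}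
    (hn : Nat.card V = n)
    (hE : Nat.card (Σ u : V, Σ w : V, u ⟶ w) = E)
    (hconn : ∀ u w : V, ∃ p : Quiver.Path u w, 0 < p.length)
    (v : V) :
    E - n + 1 ≤ Nat.card { p : Σ w : V, Quiver.Path v w // p.2.length = n } := by
  classical
  have : RootedConnected v := ⟨fun b => ⟨(hconn v b).choose⟩⟩
  have := Path.finite_subtype_length_eq v n
  have hout : ∀ a : V, ∃ b, Nonempty (a ⟶ b) := fun a => by
    obtain ⟨p, hp⟩ := hconn a a
    obtain ⟨b, e, -, -⟩ := p.length_ne_zero_iff_eq_comp.1 hp.ne'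
    exact ⟨b, ⟨e⟩⟩
  choose encode hencode using fun x (hx : x ∈ (geodesicArrows v)ᶜ) =>
    exists_path_length_eq_find?_arrows v hout hn.le hx
  have hcard_compl : Nat.card ↥(geodesicArrows v)ᶜ ≤
      Nat.card { p : Σ w : V, Path v w // p.2.length = n } :=
    Nat.card_le_card_of_injective (fun x => encode x.1 x.2) fun x y hxy => by
      dsimp only at hxy
      exact Subtype.ext (Option.some.inj (by rw [← hencode x.1 x.2, ← hencode y.1 y.2, hxy]))
  -- needed when `E < n`, where the truncated `E - n + 1` is `1`
  have hpaths : 0 < Nat.card { p : Σ w : V, Path v w // p.2.length = n } := by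
    obtain ⟨p, hp⟩ := Path.exists_length_eq hout v n
    have : Nonempty { p : Σ w : V, Path v w // p.2.length = n } := ⟨⟨p, hp⟩⟩
    exact Nat.card_pos
  have : Nonempty V := ⟨v⟩
  have hV : 0 < n := hn ▸ Nat.card_pos
  have hT := ncard_geodesicArrows_le v
  have hsplit := Set.ncard_add_ncard_compl (geodesicArrows v)
  rw [Nat.card_coe_set_eq] at hcard_compl
  omega
end
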